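/- The metric g = dy₁² + dy₂² + (y₁ dy₂ + dy₃)² on ℝ³ (the geometry Nil) is an expanding Ricci soliton with soliton flow E = −y₁ ∂/∂y₁ − y₂ ∂/∂y₂ − 2y₃ ∂/∂y₃: that is, −2 Ricci(g) = L_E g + 2Ag holds for some positive constant A. Moreover this soliton is not of gradient type, since dE♭ = −2(y₁y₂+y₃) dy₁∧dy₂ − y₂ dy₁∧dy₃ + y₁ dy₂∧dy₃ ≠ 0. -/

import Mathlib

open scoped BigOperators

noncomputable section

/-- Partial derivative of `f` in the `i`-th coordinate direction. -/
def pd {n : ℕ} (f : (Fin n → ℝ) → ℝ) (i : Fin n) (x : Fin n → ℝ) : ℝ :=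
  fderiv ℝ f x (Pi.single i 1)

/-- Pointwise inverse of a metric (the components `g^{ij}`). -/
def ginv {n : ℕ} (g : (Fin n → ℝ) → Matrix (Fin n) (Fin n) ℝ) (x : Fin n → ℝ) :
    Matrix (Fin n) (Fin n) ℝ := (g x)⁻¹

/-- Christoffel symbols `Γ^k_{ij}` of the metric `g`. -/
def christoffel {n : ℕ} (g : (Fin n → ℝ) → Matrix (Fin n) (Fin n) ℝ)
    (k i j : Fin n) (x : Fin n → ℝ) : ℝ :=
  (1 / 2) * ∑ l, ginv g x k l *
    (pd (fun y => g y l j) i x + pd (fun y => g y l i) j x - pd (fun y => g y i j) l x)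

/-- The Ricci tensor in coordinates:
`Ric_{ij} = ∂_k Γ^k_{ij} − ∂_i Γ^k_{kj} + Γ^k_{kl} Γ^l_{ij} − Γ^k_{il} Γ^l_{kj}`. -/
def ricci {n : ℕ} (g : (Fin n → ℝ) → Matrix (Fin n) (Fin n) ℝ)
    (i j : Fin n) (x : Fin n → ℝ) : ℝ :=
  (∑ k, pd (christoffel g k i j) k x) - (∑ k, pd (christoffel g k k j) i x)
    + (∑ k, ∑ l, christoffel g k k l x * christoffel g l i j x)
    - ∑ k, ∑ l, christoffel g k i l x * christoffel g l k j x

/-- Lie derivative of the metric: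
`(L_E g)_{ij} = E^k ∂_k g_{ij} + g_{kj} ∂_i E^k + g_{ik} ∂_j E^k`. -/
def lieD {n : ℕ} (g : (Fin n → ℝ) → Matrix (Fin n) (Fin n) ℝ)
    (E : (Fin n → ℝ) → Fin n → ℝ) (i j : Fin n) (x : Fin n → ℝ) : ℝ :=
  (∑ k, E x k * pd (fun y => g y i j) k x)
    + (∑ k, g x k j * pd (fun y => E y k) i x)
    + ∑ k, g x i k * pd (fun y => E y k) j x

/-- The dual 1-form `E♭ = g(E,·)`. -/
def flat {n : ℕ} (g : (Fin n → ℝ) → Matrix (Fin n) (Fin n) ℝ)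
    (E : (Fin n → ℝ) → Fin n → ℝ) (j : Fin n) (x : Fin n → ℝ) : ℝ :=
  ∑ k, g x j k * E x k

/-- The Nil metric `g = dy₁² + dy₂² + (y₁ dy₂ + dy₃)²` on `ℝ³`. -/
def nilMetric (x : Fin 3 → ℝ) : Matrix (Fin 3) (Fin 3) ℝ :=
  Matrix.of fun i j =>
    !![1, 0, 0; 0, 1 + (x 0) ^ 2, x 0; 0, x 0, 1] i j

/-- The soliton flow on Nil: `E = −y₁ ∂/∂y₁ − y₂ ∂/∂y₂ − 2y₃ ∂/∂y₃`. -/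
def nilFlow (x : Fin 3 → ℝ) : Fin 3 → ℝ :=
  ![-(x 0), -(x 1), -(2 * x 2)]

/-! The coefficients of the Nil metric, of its inverse and of the flow are polynomials in the
coordinates, so the coordinate expressions for the Christoffel symbols, the Ricci tensor, the Lie
derivative and `E♭` are evaluations of polynomials, with partial derivatives computed by
`MvPolynomial.pderiv`. This gives `Ric = ½ [[-1, 0, 0], [0, y₁² - 1, y₁], [0, y₁, 1]]` and
`L_E g = [[-2, 0, 0], [0, -2 - 4y₁², -4y₁], [0, -4y₁, -4]]`, hence `-2 Ric - L_E g = 3 g`, i.e.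
`A = 3/2`. The `dy₁ ∧ dy₃` component `-y₂` of `dE♭` does not vanish at `(0, 1, 0)`. -/

open MvPolynomial

theorem MvPolynomial.hasFDerivAt_eval {σ : Type*} [Fintype σ] (p : MvPolynomial σ ℝ)
    (x : σ → ℝ) :
    HasFDerivAt (fun y => eval y p)
      (∑ i, eval x (pderiv i p) • (ContinuousLinearMap.proj i : (σ → ℝ) →L[ℝ] ℝ)) x := by
  classical
  induction p using MvPolynomial.induction_on with
  | C a => simpa using hasFDerivAt_const (eval x (C a)) x
  | add p q hp hq =>
    simp only [map_add, add_smul, Finset.sum_add_distrib]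
    exact hp.add hq
  | mul_X p i hp =>
    simp only [eval_mul, eval_X]
    refine (hp.mul (hasFDerivAt_apply i x)).congr_fderiv ?_
    ext v
    simp [Pi.single_apply, add_mul, ite_mul, Finset.sum_add_distrib, Finset.mul_sum,
      apply_ite (eval x), mul_assoc]

theorem pd_eval {n : ℕ} (p : MvPolynomial (Fin n) ℝ) (i : Fin n) (x : Fin n → ℝ) :
    pd (fun y => eval y p) i x = eval x (pderiv i p) := by
  simp [pd, (hasFDerivAt_eval p x).fderiv, Pi.single_apply]

@[simp]
theorem MvPolynomial.pderiv_ofNat {R σ : Type*} [CommSemiring R] (i : σ) (m : ℕ) [m.AtLeastTwo] :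
    pderiv i (ofNat(m) : MvPolynomial σ R) = 0 :=
  (pderiv i).map_natCast m

section PolynomialMetric

variable {n : ℕ} (G Ginv : Matrix (Fin n) (Fin n) (MvPolynomial (Fin n) ℝ))
  (V : Fin n → MvPolynomial (Fin n) ℝ)

def christoffelPoly (k i j : Fin n) : MvPolynomial (Fin n) ℝ :=
  C (1 / 2) * ∑ l, Ginv k l * (pderiv i (G l j) + pderiv j (G l i) - pderiv l (G i j))

def ricciPoly (i j : Fin n) : MvPolynomial (Fin n) ℝ :=
  (∑ k, pderiv k (christoffelPoly G Ginv k i j)) - (∑ k, pderiv i (christoffelPoly G Ginv k k j))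
    + (∑ k, ∑ l, christoffelPoly G Ginv k k l * christoffelPoly G Ginv l i j)
    - ∑ k, ∑ l, christoffelPoly G Ginv k i l * christoffelPoly G Ginv l k j

def lieDPoly (i j : Fin n) : MvPolynomial (Fin n) ℝ :=
  (∑ k, V k * pderiv k (G i j)) + (∑ k, G k j * pderiv i (V k)) + ∑ k, G i k * pderiv j (V k)

def flatPoly (j : Fin n) : MvPolynomial (Fin n) ℝ :=
  ∑ k, G j k * V k

variable {G Ginv V}

theorem ginv_map_eval (hG : G * Ginv = 1) (x : Fin n → ℝ) :
    ginv (fun y => G.map (eval y)) x = Ginv.map (eval x) := by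
  refine Matrix.inv_eq_right_inv ?_
  rw [← Matrix.map_mul, hG, Matrix.map_one _ (map_zero _) (map_one _)]

theorem christoffel_map_eval (hG : G * Ginv = 1) (k i j : Fin n) :
    christoffel (fun y => G.map (eval y)) k i j =
      fun x => eval x (christoffelPoly G Ginv k i j) := by
  funext x
  simp [christoffel, christoffelPoly, ginv_map_eval hG, pd_eval]

theorem ricci_map_eval (hG : G * Ginv = 1) (i j : Fin n) (x : Fin n → ℝ) :
    ricci (fun y => G.map (eval y)) i j x = eval x (ricciPoly G Ginv i j) := by
  simp [ricci, ricciPoly, christoffel_map_eval hG, pd_eval]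

theorem lieD_map_eval (i j : Fin n) (x : Fin n → ℝ) :
    lieD (fun y => G.map (eval y)) (fun y k => eval y (V k)) i j x =
      eval x (lieDPoly G V i j) := by
  simp [lieD, lieDPoly, pd_eval]

theorem flat_map_eval (j : Fin n) :
    flat (fun y => G.map (eval y)) (fun y k => eval y (V k)) j =
      fun x => eval x (flatPoly G V j) := by
  funext x
  simp [flat, flatPoly]

end PolynomialMetric

def nilMetricPoly : Matrix (Fin 3) (Fin 3) (MvPolynomial (Fin 3) ℝ) :=
  !![1, 0, 0; 0, 1 + X 0 ^ 2, X 0; 0, X 0, 1]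

def nilMetricInvPoly : Matrix (Fin 3) (Fin 3) (MvPolynomial (Fin 3) ℝ) :=
  !![1, 0, 0; 0, 1, -X 0; 0, -X 0, 1 + X 0 ^ 2]

def nilFlowPoly : Fin 3 → MvPolynomial (Fin 3) ℝ :=
  ![-X 0, -X 1, -(2 * X 2)]

theorem nilMetric_eq_map_eval : nilMetric = fun y => nilMetricPoly.map (eval y) := by
  funext y i j
  fin_cases i <;> fin_cases j <;> simp [nilMetric, nilMetricPoly]

theorem nilFlow_eq_eval : nilFlow = fun y k => eval y (nilFlowPoly k) := by
  funext y k
  fin_cases k <;> simp [nilFlow, nilFlowPoly]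

theorem nilMetricPoly_mul_nilMetricInvPoly : nilMetricPoly * nilMetricInvPoly = 1 := by
  ext i j : 1
  fin_cases i <;> fin_cases j <;>
    simp [nilMetricPoly, nilMetricInvPoly, Matrix.mul_apply, Fin.sum_univ_three] <;> ring

theorem ricci_nilMetric (x : Fin 3 → ℝ) (i j : Fin 3) :
    ricci nilMetric i j x =
      !![-1 / 2, 0, 0; 0, (x 0 ^ 2 - 1) / 2, x 0 / 2; 0, x 0 / 2, 1 / 2] i j := by
  rw [nilMetric_eq_map_eval, ricci_map_eval nilMetricPoly_mul_nilMetricInvPoly]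
  fin_cases i <;> fin_cases j <;>
    simp [ricciPoly, christoffelPoly, Fin.sum_univ_three, nilMetricPoly, nilMetricInvPoly] <;> ring

theorem lieD_nilMetric_nilFlow (x : Fin 3 → ℝ) (i j : Fin 3) :
    lieD nilMetric nilFlow i j x =
      !![-2, 0, 0; 0, -2 - 4 * x 0 ^ 2, -4 * x 0; 0, -4 * x 0, -4] i j := by
  rw [nilMetric_eq_map_eval, nilFlow_eq_eval, lieD_map_eval]
  fin_cases i <;> fin_cases j <;>
    simp [lieDPoly, Fin.sum_univ_three, nilMetricPoly, nilFlowPoly] <;> ring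

theorem curl_flat_nilMetric_nilFlow (x : Fin 3 → ℝ) :
    pd (flat nilMetric nilFlow 1) 0 x - pd (flat nilMetric nilFlow 0) 1 x
        = -2 * (x 0 * x 1 + x 2) ∧
      pd (flat nilMetric nilFlow 2) 0 x - pd (flat nilMetric nilFlow 0) 2 x = -(x 1) ∧
      pd (flat nilMetric nilFlow 2) 1 x - pd (flat nilMetric nilFlow 1) 2 x = x 0 := by
  simp only [nilMetric_eq_map_eval, nilFlow_eq_eval, flat_map_eval, pd_eval]
  refine ⟨?_, ?_, ?_⟩ <;>
    simp [flatPoly, Fin.sum_univ_three, nilMetricPoly, nilFlowPoly] <;> ring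

/-- Nil with the flow `E = −y₁∂₁ − y₂∂₂ − 2y₃∂₃` is an expanding Ricci
soliton: `−2 Ricci(g) = L_E g + 2Ag` for some `A > 0`; moreover it is not of gradient type,
since `dE♭ = −2(y₁y₂+y₃) dy₁∧dy₂ − y₂ dy₁∧dy₃ + y₁ dy₂∧dy₃ ≠ 0`. -/
theorem nil_is_expanding_nongradient_soliton :
    (∃ A : ℝ, 0 < A ∧
      ∀ (x : Fin 3 → ℝ) (i j : Fin 3),
        -2 * ricci nilMetric i j x =
          lieD nilMetric nilFlow i j x + 2 * A * nilMetric x i j) ∧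
    (∀ x : Fin 3 → ℝ,
      pd (flat nilMetric nilFlow 1) 0 x - pd (flat nilMetric nilFlow 0) 1 x
          = -2 * (x 0 * x 1 + x 2) ∧
      pd (flat nilMetric nilFlow 2) 0 x - pd (flat nilMetric nilFlow 0) 2 x = -(x 1) ∧
      pd (flat nilMetric nilFlow 2) 1 x - pd (flat nilMetric nilFlow 1) 2 x = x 0) ∧
    ¬(∀ (x : Fin 3 → ℝ) (i j : Fin 3),
        pd (flat nilMetric nilFlow j) i x - pd (flat nilMetric nilFlow i) j x = 0) := by
  refine ⟨⟨3 / 2, by norm_num, fun x i j => ?_⟩, curl_flat_nilMetric_nilFlow, fun hclosed => ?_⟩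
  · rw [ricci_nilMetric, lieD_nilMetric_nilFlow]
    fin_cases i <;> fin_cases j <;> simp [nilMetric] <;> ring
  · have h := hclosed ![0, 1, 0] 0 2
    rw [(curl_flat_nilMetric_nilFlow _).2.1] at h
    norm_num at h
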